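/- arXiv:2104.14768 — 3 statements merged into one kernel-verified Lean document; each statement's English description precedes it below -/
import Mathlib

section
/- Let G be a group of finite Prüfer rank with a finite normal subgroup D such that G/D is torsion-free abelian. Then G has a characteristic central torsion-free subgroup A of finite index. -/
/-!
Commutators of `G` lie in `D`, and the centralizer `C` of the finite normal subgroup `D` has
finite index `k`. For `x ∈ C` and any `g` we have `g x g⁻¹ = ⁅g, x⁆ x` with `⁅g, x⁆ ∈ D`
commuting with `x`, so `x ^ |D|` is central; hence every `x ^ (k |D|)` is central.
An abelian group of exponent `n` whose finitely generated subgroups are `m`-generated has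
order at most `n ^ m`, so `G ⧸ (Z(G) ⊔ D)` is finite and `Z(G)` has finite index.
The subgroup of `|D|`-th powers of central elements is characteristic and, by the same
finiteness argument, of finite index in `Z(G)`; it is torsion-free because a torsion element
`z ^ |D|` forces `z ∈ D`, i.e. `z ^ |D| = 1`.
-/

open Subgroup
open scoped commutatorElement

def Group.PruferRankLE (G : Type*) [Group G] (m : ℕ) : Prop :=
  ∀ H : Subgroup G, H.FG → ∃ S : Finset G, S.card ≤ m ∧ closure (S : Set G) = H

namespace Group.PruferRankLE

variable {G Q : Type*} [Group G] [Group Q] {m : ℕ}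

theorem of_injective (hG : PruferRankLE G m) (f : Q →* G) (hf : Function.Injective f) :
    PruferRankLE Q m := by
  classical
  rintro H ⟨t, rfl⟩
  obtain ⟨S, hSm, hS⟩ := hG _ ⟨t.image f, rfl⟩
  have hSf : (S : Set G) ⊆ Set.range f := by
    have : closure (S : Set G) ≤ f.range := by
      rw [hS, Finset.coe_image, ← MonoidHom.map_closure]
      exact map_le_range f _
    exact Subgroup.subset_closure.trans this
  refine ⟨S.preimage f hf.injOn, ?_, map_injective hf ?_⟩
  · exact (Finset.card_preimage _ _ _).trans_le ((Finset.card_filter_le _ _).trans hSm)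
  · rw [MonoidHom.map_closure, MonoidHom.map_closure, Finset.coe_preimage,
      Set.image_preimage_eq_of_subset hSf, hS, Finset.coe_image]

theorem of_surjective (hG : PruferRankLE G m) (f : G →* Q) (hf : Function.Surjective f) :
    PruferRankLE Q m := by
  classical
  rintro H ⟨t, rfl⟩
  obtain ⟨S, hSm, hS⟩ := hG _ ⟨t.image (Function.surjInv hf), rfl⟩
  refine ⟨S.image f, Finset.card_image_le.trans hSm, ?_⟩
  rw [Finset.coe_image, ← MonoidHom.map_closure, hS, MonoidHom.map_closure, Finset.coe_image,
    ← Set.image_comp, (Function.rightInverse_surjInv hf).id, Set.image_id]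

theorem subgroup (hG : PruferRankLE G m) (H : Subgroup G) : PruferRankLE H m :=
  hG.of_injective H.subtype H.subtype_injective

theorem finite_of_pow_eq_one {A : Type*} [CommGroup A] (hA : PruferRankLE A m) {n : ℕ}
    (hn : n ≠ 0) (hpow : ∀ a : A, a ^ n = 1) : Finite A := by
  classical
  have hcard : ∀ s : Finset A, s.card ≤ n ^ m := by
    intro s
    obtain ⟨S, hSm, hS⟩ := hA _ ⟨s, rfl⟩
    have hdvd : Nat.card (closure (S : Set A)) ∣ n ^ Group.rank (closure (S : Set A)) :=
      card_dvd_exponent_pow_rank' _ fun a => Subtype.ext (hpow a)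
    have : Finite (closure (S : Set A)) :=
      Nat.finite_of_card_ne_zero (ne_zero_of_dvd_ne_zero (by positivity) hdvd)
    have hsS : (s : Set A) ⊆ closure (S : Set A) := hS ▸ Subgroup.subset_closure
    calc s.card = Nat.card (s : Set A) := by simp
      _ ≤ Nat.card (closure (S : Set A)) := Nat.card_mono (Set.toFinite _) hsS
      _ ≤ n ^ Group.rank (closure (S : Set A)) := Nat.le_of_dvd (by positivity) hdvd
      _ ≤ n ^ m := Nat.pow_le_pow_right (Nat.pos_of_ne_zero hn)
          ((rank_closure_finset_le_card S).trans hSm)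
  by_contra hinf
  have : Infinite A := not_finite_iff_infinite.mp hinf
  obtain ⟨s, hs⟩ := Infinite.exists_subset_card_eq A (n ^ m + 1)
  have := hcard s
  omega

theorem finiteIndex_of_commutator_le (hG : PruferRankLE G m) {n : ℕ} (hn : n ≠ 0)
    {H : Subgroup G} (hH : commutator G ≤ H) (hpow : ∀ g : G, g ^ n ∈ H) : H.FiniteIndex := by
  have : H.Normal := .of_commutator_le G hH
  have : IsMulCommutative (G ⧸ H) := Normal.quotient_commutative_iff_commutator_le.mpr hH
  open scoped IsMulCommutative in
  have : Finite (G ⧸ H) :=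
    (hG.of_surjective _ (QuotientGroup.mk'_surjective H)).finite_of_pow_eq_one hn <| by
      rintro ⟨g⟩
      exact (QuotientGroup.eq_one_iff _).mpr (hpow g)
  exact finiteIndex_of_finite_quotient

end Group.PruferRankLE

section

variable {G : Type*} [Group G]

theorem Subgroup.pow_natCard_eq_one_of_mem {H : Subgroup G} {h : G} (hh : h ∈ H) :
    h ^ Nat.card H = 1 :=
  congrArg Subtype.val (pow_card_eq_one' (x := (⟨h, hh⟩ : H)))

theorem Subgroup.finiteIndex_centralizer (D : Subgroup G) [D.Normal] [Finite D] :
    (centralizer (D : Set G)).FiniteIndex := by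
  refine finiteIndex_of_le (H := (MulAut.conjNormal (H := D)).ker) fun g hg d hd => ?_
  have := congrArg Subtype.val (DFunLike.congr_fun (MonoidHom.mem_ker.mp hg) ⟨d, hd⟩)
  simp only [MulAut.conjNormal_apply, MulAut.one_apply] at this
  exact (mul_inv_eq_iff_eq_mul.mp this).symm

theorem pow_mem_center_of_mem_centralizer {D : Subgroup G} (hD : commutator G ≤ D) {n : ℕ}
    (hn : ∀ d ∈ D, d ^ n = 1) {x : G} (hx : x ∈ centralizer (D : Set G)) :
    x ^ n ∈ center G := by
  rw [mem_center_iff]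
  intro g
  have hgx : ⁅g, x⁆ ∈ D := hD (commutator_mem_commutator (mem_top g) (mem_top x))
  have hconj : g * x ^ n * g⁻¹ = x ^ n := by
    rw [← conj_pow, show g * x * g⁻¹ = ⁅g, x⁆ * x by group,
      Commute.mul_pow (mem_centralizer_iff.mp hx _ hgx), hn _ hgx, one_mul]
  rw [← mul_inv_eq_iff_eq_mul, hconj]

theorem Group.PruferRankLE.finiteIndex_center {m : ℕ} (hG : PruferRankLE G m)
    (D : Subgroup G) [D.Normal] [Finite D] (hD : commutator G ≤ D) : (center G).FiniteIndex := by
  set C := centralizer (D : Set G)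
  have := D.finiteIndex_centralizer
  have hpow : ∀ g : G, g ^ (C.index * Nat.card D) ∈ center G ⊔ D := fun g => by
    rw [pow_mul]
    exact mem_sup_left <| pow_mem_center_of_mem_centralizer hD
      (fun _ => pow_natCard_eq_one_of_mem) (C.pow_index_mem g)
  have hsup : (center G ⊔ D).FiniteIndex := hG.finiteIndex_of_commutator_le
    (mul_ne_zero FiniteIndex.index_ne_zero Nat.card_pos.ne') (hD.trans le_sup_right) hpow
  have hrel : (center G).relIndex (center G ⊔ D) ≠ 0 := by
    rw [relIndex_sup_left]
    exact FiniteIndex.index_ne_zero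
  rw [finiteIndex_iff, ← relIndex_mul_index (le_sup_left : center G ≤ center G ⊔ D)]
  exact mul_ne_zero hrel hsup.index_ne_zero

open scoped IsMulCommutative in
def Subgroup.centerPowers (G : Type*) [Group G] (n : ℕ) : Subgroup G :=
  (powMonoidHom n : center G →* center G).range.map (center G).subtype

namespace Subgroup

variable {n : ℕ} {a : G}

theorem mem_centerPowers : a ∈ centerPowers G n ↔ ∃ z ∈ center G, z ^ n = a := by
  constructor
  · rintro ⟨_, ⟨z, rfl⟩, rfl⟩
    exact ⟨z, z.2, rfl⟩
  · rintro ⟨z, hz, rfl⟩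
    exact ⟨_, ⟨⟨z, hz⟩, rfl⟩, rfl⟩

theorem centerPowers_le_center : centerPowers G n ≤ center G :=
  map_subtype_le _

instance centerPowers_characteristic : (centerPowers G n).Characteristic := by
  refine characteristic_iff_le_comap.mpr fun ϕ a ha => ?_
  obtain ⟨z, hz, rfl⟩ := mem_centerPowers.mp ha
  exact mem_centerPowers.mpr ⟨ϕ z, characteristic_iff_le_comap.mp inferInstance ϕ hz,
    (map_pow ϕ z n).symm⟩

end Subgroup

theorem Group.PruferRankLE.finiteIndex_centerPowers {m n : ℕ} (hG : PruferRankLE G m)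
    (hn : n ≠ 0) [(center G).FiniteIndex] : (centerPowers G n).FiniteIndex := by
  open scoped IsMulCommutative in
  have : (powMonoidHom n : center G →* center G).range.FiniteIndex :=
    (hG.subgroup (center G)).finiteIndex_of_commutator_le hn
      (((commutator_eq_bot_iff _).mpr inferInstance).trans_le bot_le)
      fun z => ⟨z, rfl⟩
  rw [finiteIndex_iff, centerPowers, index_map_subtype]
  exact mul_ne_zero this.index_ne_zero FiniteIndex.index_ne_zero

theorem pow_eq_one_of_isOfFinOrder_pow {D : Subgroup G} (hD : ∀ g : G, IsOfFinOrder g → g ∈ D)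
    {n : ℕ} (hn : ∀ d ∈ D, d ^ n = 1) {z : G} (hz : IsOfFinOrder (z ^ n)) : z ^ n = 1 := by
  rcases isOfFinOrder_pow.mp hz with hz | rfl
  · exact hn z (hD z hz)
  · exact pow_zero z

end

/-- A group of finite Prüfer rank with a finite normal subgroup `D` such that
`G/D` is torsion-free abelian has a characteristic central torsion-free
subgroup of finite index. -/
theorem exists_characteristic_central_torsionFree_finiteIndex
    {G : Type*} [Group G]
    (hrank : ∃ m : ℕ, ∀ H : Subgroup G, H.FG →
      ∃ S : Finset G, S.card ≤ m ∧ Subgroup.closure (S : Set G) = H)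
    (D : Subgroup G) [D.Normal] (hDfin : Finite D)
    (hab : ∀ x y : G ⧸ D, x * y = y * x)
    (htf : ∀ g : G ⧸ D, g ≠ 1 → ¬IsOfFinOrder g) :
    ∃ A : Subgroup G, A.Characteristic ∧ A ≤ Subgroup.center G ∧
      (∀ a ∈ A, a ≠ 1 → ∀ n : ℕ, 0 < n → a ^ n ≠ 1) ∧ A.FiniteIndex := by
  obtain ⟨m, hG⟩ : ∃ m, Group.PruferRankLE G m := hrank
  have hD : commutator G ≤ D :=
    Normal.quotient_commutative_iff_commutator_le.mp (IsMulCommutative.of_comm hab)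
  have htors : ∀ g : G, IsOfFinOrder g → g ∈ D := fun g hg => by
    by_contra hgD
    exact htf g (mt (QuotientGroup.eq_one_iff g).mp hgD) ((QuotientGroup.mk' D).isOfFinOrder hg)
  have := hG.finiteIndex_center D hD
  refine ⟨centerPowers G (Nat.card D), inferInstance, centerPowers_le_center, ?_,
    hG.finiteIndex_centerPowers Nat.card_pos.ne'⟩
  rintro a ha ha1 k hk hak
  obtain ⟨z, -, rfl⟩ := mem_centerPowers.mp ha
  exact ha1 (pow_eq_one_of_isOfFinOrder_pow htors (fun _ => pow_natCard_eq_one_of_mem)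
    (isOfFinOrder_iff_pow_eq_one.mpr ⟨k, hk, hak⟩))
end

section
/- Let G be a group with finite derived subgroup G' of order dividing m, and let C = C_G(G'). Then every element of the subgroup B generated by m-th powers of elements of C is central in G, i.e. C^m ≤ Z(G). -/
/-! Conjugating `c` by `g` multiplies it by the commutator `k = ⁅c⁻¹, g⁆ ∈ G'`. If `c` centralises
`G'` then `c` and `k` commute, so `g c^m g⁻¹ = (c k)^m = c^m k^m = c^m`, because the exponent of
`G'` divides `m`. Hence every `m`-th power of an element of `C` is central, and so is the subgroup
they generate. -/

open scoped commutatorElement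

theorem conj_eq_mul_commutatorElement_inv_left {G : Type*} [Group G] (c g : G) :
    g * c * g⁻¹ = c * ⁅c⁻¹, g⁆ := by
  simp only [commutatorElement_def, inv_inv]
  group

theorem commute_pow_of_commute_commutatorElement {G : Type*} [Group G] {c g : G} {m : ℕ}
    (hcomm : Commute c ⁅c⁻¹, g⁆) (hpow : ⁅c⁻¹, g⁆ ^ m = 1) : Commute g (c ^ m) := by
  refine mul_inv_eq_iff_eq_mul.mp ?_
  calc g * c ^ m * g⁻¹ = (g * c * g⁻¹) ^ m := conj_pow.symm
    _ = (c * ⁅c⁻¹, g⁆) ^ m := by rw [conj_eq_mul_commutatorElement_inv_left]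
    _ = c ^ m * ⁅c⁻¹, g⁆ ^ m := hcomm.mul_pow m
    _ = c ^ m := by rw [hpow, mul_one]

theorem pow_mem_center_of_mem_centralizer_commutator {G : Type*} [Group G] {c : G} {m : ℕ}
    (hc : c ∈ Subgroup.centralizer (commutator G : Set G))
    (hexp : ∀ k ∈ commutator G, k ^ m = 1) : c ^ m ∈ Subgroup.center G := by
  refine Subgroup.mem_center_iff.mpr fun g => ?_
  have hk : ⁅c⁻¹, g⁆ ∈ commutator G :=
    Subgroup.commutator_mem_commutator (Subgroup.mem_top _) (Subgroup.mem_top _)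
  exact commute_pow_of_commute_commutatorElement
    (Subgroup.mem_centralizer_iff.mp hc _ hk).symm (hexp _ hk)

theorem pow_centralizer_le_center_general {G : Type*} [Group G] (m : ℕ)
    (hdvd : Nat.card (commutator G) ∣ m) :
    Subgroup.closure
        {x : G | ∃ c ∈ Subgroup.centralizer (commutator G : Set G), x = c ^ m}
      ≤ Subgroup.center G := by
  have hexp : ∀ k ∈ commutator G, k ^ m = 1 := fun k hk =>
    orderOf_dvd_iff_pow_eq_one.mp (((commutator G).orderOf_dvd_natCard hk).trans hdvd)
  rw [Subgroup.closure_le]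
  rintro _ ⟨c, hc, rfl⟩
  exact pow_mem_center_of_mem_centralizer_commutator hc hexp

/-- If `G'` is finite of order dividing `m` and `C = C_G(G')`, then the subgroup
generated by `m`-th powers of elements of `C` is contained in the centre of `G`. -/
theorem pow_centralizer_le_center {G : Type*} [Group G] (m : ℕ)
    (hfin : Finite (commutator G)) (hdvd : Nat.card (commutator G) ∣ m) :
    Subgroup.closure
        {x : G | ∃ c ∈ Subgroup.centralizer (commutator G : Set G), x = c ^ m}
      ≤ Subgroup.center G :=
  pow_centralizer_le_center_general m hdvd
end

section
/- Let G act on a torsion-free abelian group A of finite rank, and suppose the rational G-socle satisfies Soc_G(A ⊗ Q) = A ⊗ Q and A satisfies the maximal condition on G-invariant subgroups. Then Δ_G(A), the set of elements of A with finite G-orbit, is a finitely generated subgroup of A. -/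
/-!
Under the maximal condition, any `G`-invariant subgroup is generated, as a `G`-invariant
subgroup, by finitely many of its elements: a maximal member of the family of subgroups
generated by the `G`-orbits of finite subsets of it cannot miss any element. For `Δ_G(A)`
these finitely many elements have finite orbits, and the union of these orbits is a finite
set of ordinary generators.
-/

open MulAction

section OrbitClosure

variable (G : Type*) [Group G] {A : Type*} [AddCommGroup A] [DistribMulAction G A]

def orbitClosure (T : Set A) : AddSubgroup A :=
  AddSubgroup.closure (⋃ t ∈ T, orbit G t)

variable {G}

theorem subset_orbitClosure (T : Set A) : T ⊆ orbitClosure G T := fun t ht =>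
  AddSubgroup.subset_closure (Set.mem_biUnion ht (mem_orbit_self t))

theorem orbitClosure_mono {T T' : Set A} (h : T ⊆ T') : orbitClosure G T ≤ orbitClosure G T' :=
  AddSubgroup.closure_mono (Set.biUnion_subset_biUnion_left h)

theorem orbitClosure_le {T : Set A} {H : AddSubgroup A} (hT : T ⊆ H)
    (hH : ∀ g : G, ∀ a ∈ H, g • a ∈ H) : orbitClosure G T ≤ H := by
  refine (AddSubgroup.closure_le H).mpr (Set.iUnion₂_subset fun t ht => ?_)
  rintro _ ⟨g, rfl⟩
  exact hH g t (hT ht)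

theorem smul_mem_orbitClosure (T : Set A) (g : G) (a : A) (ha : a ∈ orbitClosure G T) :
    g • a ∈ orbitClosure G T := by
  induction ha using AddSubgroup.closure_induction with
  | mem x hx =>
    obtain ⟨t, ht, hx⟩ := Set.mem_iUnion₂.mp hx
    exact AddSubgroup.subset_closure (Set.mem_biUnion ht (mem_orbit_of_mem_orbit g hx))
  | zero => simpa only [smul_zero] using zero_mem _
  | add x y _ _ hx hy => simpa only [smul_add] using add_mem hx hy
  | neg x _ hx => simpa only [smul_neg] using neg_mem hx

theorem orbitClosure_fg {T : Set A} (hT : T.Finite) (horb : ∀ t ∈ T, (orbit G t).Finite) :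
    (orbitClosure G T).FG :=
  AddSubgroup.fg_iff _ |>.mpr ⟨_, rfl, hT.biUnion horb⟩

end OrbitClosure

section MaximalCondition

variable {G : Type*} [Group G] {A : Type*} [AddCommGroup A] [DistribMulAction G A]

variable (G A) in
abbrev InvariantAddSubgroup : Type _ := {H : AddSubgroup A // ∀ g : G, ∀ a ∈ H, g • a ∈ H}

theorem wellFoundedGT_invariantAddSubgroup
    (hmax : ∀ f : ℕ →o AddSubgroup A,
      (∀ n : ℕ, ∀ g : G, ∀ a ∈ f n, g • a ∈ f n) → ∃ n, ∀ m, n ≤ m → f m = f n) :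
    WellFoundedGT (InvariantAddSubgroup G A) := by
  refine wellFoundedGT_iff_monotone_chain_condition.mpr fun f => ?_
  obtain ⟨n, hn⟩ := hmax ((OrderHom.Subtype.val _).comp f) fun n => (f n).2
  exact ⟨n, fun m hm => Subtype.ext (hn m hm).symm⟩

theorem exists_finite_orbitClosure_eq
    [WellFoundedGT (InvariantAddSubgroup G A)]
    {H : AddSubgroup A} (hH : ∀ g : G, ∀ a ∈ H, g • a ∈ H) :
    ∃ T : Set A, T.Finite ∧ T ⊆ H ∧ orbitClosure G T = H := by
  let S : Set (InvariantAddSubgroup G A) :=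
    {K | ∃ T : Set A, T.Finite ∧ T ⊆ H ∧ orbitClosure G T = K.1}
  obtain ⟨K, ⟨T, hT, hTH, hTK⟩, hmaximal⟩ := wellFounded_gt.has_min S
    ⟨⟨_, smul_mem_orbitClosure ∅⟩, ∅, Set.finite_empty, Set.empty_subset _, rfl⟩
  refine ⟨T, hT, hTH, le_antisymm (orbitClosure_le hTH hH) fun x hx => ?_⟩
  have heq : orbitClosure G T = orbitClosure G (insert x T) := by
    refine (orbitClosure_mono (Set.subset_insert x T)).eq_of_not_lt fun hlt =>
      hmaximal ⟨_, smul_mem_orbitClosure _⟩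
        ⟨insert x T, hT.insert x, Set.insert_subset hx hTH, rfl⟩ ?_
    rwa [← Subtype.coe_lt_coe, ← hTK]
  exact heq ▸ subset_orbitClosure _ (Set.mem_insert x T)

end MaximalCondition

theorem delta_fg_of_socle_and_max_condition_general
    {G : Type*} [Group G] {A : Type*} [AddCommGroup A] [DistribMulAction G A]
    -- maximal condition on `G`-invariant subgroups:
    (hmax : ∀ f : ℕ →o AddSubgroup A,
      (∀ n : ℕ, ∀ g : G, ∀ a ∈ f n, g • a ∈ f n) → ∃ n, ∀ m, n ≤ m → f m = f n)
    (Δ : AddSubgroup A)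
    (hΔ : ∀ a : A, a ∈ Δ ↔ (Set.range fun g : G => g • a).Finite) :
    Δ.FG := by
  have := wellFoundedGT_invariantAddSubgroup hmax
  have hΔinv : ∀ g : G, ∀ a ∈ Δ, g • a ∈ Δ := fun g a ha => by
    rw [hΔ, ← orbit, orbit_smul]
    exact (hΔ a).mp ha
  obtain ⟨T, hT, hTΔ, rfl⟩ := exists_finite_orbitClosure_eq hΔinv
  exact orbitClosure_fg hT fun t ht => (hΔ t).mp (hTΔ ht)

/-- Let `G` act on a torsion-free abelian group `A` of finite rank. If the
rational `G`-socle of `A ⊗ ℚ` is all of `A ⊗ ℚ` and `A` satisfies the maximal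
condition on `G`-invariant subgroups, then `Δ_G(A)`, the subgroup of elements
with finite `G`-orbit, is finitely generated. -/
theorem delta_fg_of_socle_and_max_condition
    {G : Type*} [Group G] {A : Type*} [AddCommGroup A] [DistribMulAction G A]
    (htf : ∀ a : A, a ≠ 0 → ∀ n : ℕ, 0 < n → n • a ≠ 0)
    (hrank : ∃ m : ℕ, ∀ C : AddSubgroup A, C.FG →
      ∃ S : Finset A, S.card ≤ m ∧ AddSubgroup.closure (S : Set A) = C)
    -- `AQ` together with `ι` realizes `A ⊗ ℚ` as a `ℚG`-module:
    (AQ : Type*) [AddCommGroup AQ] [Module ℚ AQ]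
    [DistribMulAction G AQ] [SMulCommClass G ℚ AQ]
    (ι : A →+ AQ) (hιinj : Function.Injective ι)
    (hιequiv : ∀ g : G, ∀ a : A, ι (g • a) = g • ι a)
    (hdense : ∀ x : AQ, ∃ n : ℕ, 0 < n ∧ n • x ∈ Set.range ι)
    -- `Soc_G (A ⊗ ℚ) = A ⊗ ℚ`:
    (hsoc : sSup {W : Submodule ℚ AQ |
      (∀ g : G, ∀ w ∈ W, g • w ∈ W) ∧ W ≠ ⊥ ∧
      ∀ W' ≤ W, (∀ g : G, ∀ w ∈ W', g • w ∈ W') → W' = ⊥ ∨ W' = W} = ⊤)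
    -- maximal condition on `G`-invariant subgroups:
    (hmax : ∀ f : ℕ →o AddSubgroup A,
      (∀ n : ℕ, ∀ g : G, ∀ a ∈ f n, g • a ∈ f n) → ∃ n, ∀ m, n ≤ m → f m = f n)
    (Δ : AddSubgroup A)
    (hΔ : ∀ a : A, a ∈ Δ ↔ (Set.range fun g : G => g • a).Finite) :
    Δ.FG :=
  delta_fg_of_socle_and_max_condition_general hmax Δ hΔ
end
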